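/- arXiv:1911.07816 — 3 statements merged into one kernel-verified Lean document; each statement's English description precedes it below -/
import Mathlib

section
/- Let Δ > 0, B ∈ ℕ, A_{Δ,B} the uniform B-bit alphabet and q the corresponding nearest-point quantizer. Set M = (2^{B−1}−1)Δ − Δ/2. If τ ∼ Unif([−Δ, Δ]), then for all x ∈ [−M, M], E_τ[q(x + τ)] = x. -/
/-!
Off the grid `Δℤ`, which is a null set, a nearest-point quantizer agrees on the range of the
alphabet with the midrise quantizer `Q y = Δ (⌊y / Δ⌋ + 1/2)`. The error `Q y - y` is `Δ`-periodic
with mean zero over a period, and the dither interval `[x - Δ, x + Δ]` is exactly two periods long,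
so the average of `q (x + τ)` equals the average of `x + τ`, which is `x`.
-/

/-- The uniform B-bit quantization alphabet with resolution Δ. -/
def alphabet (Δ : ℝ) (B : ℕ) : Set ℝ :=
  {l | ∃ j : ℤ, -(2 ^ (B - 1) : ℤ) ≤ j ∧ j ≤ 2 ^ (B - 1) - 1 ∧ l = (2 * j + 1) * Δ / 2}

open MeasureTheory intervalIntegral Function Set
open scoped Interval

noncomputable def midriseQuantizer (Δ y : ℝ) : ℝ := Δ * (⌊y / Δ⌋ + 1 / 2)

section Quantizer

variable {Δ : ℝ}

theorem monotone_midriseQuantizer (hΔ : 0 ≤ Δ) : Monotone (midriseQuantizer Δ) := fun _ _ h =>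
  mul_le_mul_of_nonneg_left
    (add_le_add_left (Int.cast_le.2 (Int.floor_mono (div_le_div_of_nonneg_right h hΔ))) _) hΔ

theorem periodic_midriseQuantizer_sub_id : Periodic (fun y => midriseQuantizer Δ y - y) Δ := by
  intro y
  rcases eq_or_ne Δ 0 with rfl | hΔ
  · simp
  have : (y + Δ) / Δ = y / Δ + 1 := by field_simp
  simp only [midriseQuantizer, this, Int.floor_add_one]
  push_cast
  ring

theorem integral_midriseQuantizer_sub_id_period_eq_zero (hΔ : 0 < Δ) (t : ℝ) :
    ∫ y in t..t + Δ, (midriseQuantizer Δ y - y) = 0 := by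
  rw [periodic_midriseQuantizer_sub_id.intervalIntegral_add_eq t 0, zero_add]
  have h_floor : ∀ᵐ y, y ∈ Ι 0 Δ → midriseQuantizer Δ y - y = Δ / 2 - y := by
    filter_upwards [volume.ae_ne Δ] with y hyΔ hy
    rw [uIoc_of_le hΔ.le] at hy
    have : ⌊y / Δ⌋ = 0 := Int.floor_eq_zero_iff.2
      ⟨div_nonneg hy.1.le hΔ.le, (div_lt_one hΔ).2 (lt_of_le_of_ne hy.2 hyΔ)⟩
    simp only [midriseQuantizer, this, Int.cast_zero, zero_add]
    ring
  rw [integral_congr_ae h_floor, integral_sub intervalIntegrable_const intervalIntegrable_id,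
    intervalIntegral.integral_const, integral_id, smul_eq_mul]
  ring

theorem integral_midriseQuantizer_eq_integral_id (hΔ : 0 < Δ) (t : ℝ) (n : ℤ) :
    ∫ y in t..t + n • Δ, midriseQuantizer Δ y = ∫ y in t..t + n • Δ, y := by
  have h_int (a b : ℝ) : IntervalIntegrable (fun y => midriseQuantizer Δ y - y) volume a b :=
    (monotone_midriseQuantizer hΔ.le).intervalIntegrable.sub intervalIntegrable_id
  have h_periods := periodic_midriseQuantizer_sub_id.intervalIntegral_add_zsmul_eq n t h_int
  rw [integral_midriseQuantizer_sub_id_period_eq_zero hΔ, smul_zero,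
    integral_sub (monotone_midriseQuantizer hΔ.le).intervalIntegrable intervalIntegrable_id]
    at h_periods
  exact sub_eq_zero.1 h_periods

theorem abs_sub_midriseQuantizer_lt (hΔ : 0 < Δ) {y : ℝ} (hy : Int.fract (y / Δ) ≠ 0) :
    |y - midriseQuantizer Δ y| < Δ / 2 := by
  have h_pos : 0 < Int.fract (y / Δ) := (Int.fract_nonneg _).lt_of_ne' hy
  have h_lt : Int.fract (y / Δ) < 1 := Int.fract_lt_one _
  have : y - midriseQuantizer Δ y = Δ * (Int.fract (y / Δ) - 1 / 2) := by
    rw [midriseQuantizer, Int.fract, mul_sub, mul_sub, mul_div_cancel₀ _ hΔ.ne']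
    ring
  have h_half : |Int.fract (y / Δ) - 1 / 2| < 1 / 2 := abs_lt.2 ⟨by linarith, by linarith⟩
  rw [this, abs_mul, abs_of_pos hΔ]
  linarith [mul_lt_mul_of_pos_left h_half hΔ]

theorem ae_fract_div_ne_zero (hΔ : Δ ≠ 0) : ∀ᵐ y, Int.fract (y / Δ) ≠ 0 := by
  refine measure_mono_null (fun y hy => ?_)
    ((countable_range fun k : ℤ => k * Δ).measure_zero volume)
  obtain ⟨k, hk⟩ := Int.fract_eq_zero_iff.1 (not_not.1 hy)
  exact ⟨k, by simp only [hk, div_mul_cancel₀ _ hΔ]⟩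

end Quantizer

section Alphabet

variable {Δ : ℝ} {B : ℕ}

theorem eq_of_mem_alphabet_of_abs_sub_lt (hΔ : 0 < Δ) {l l' : ℝ} (hl : l ∈ alphabet Δ B)
    (hl' : l' ∈ alphabet Δ B) (h : |l - l'| < Δ) : l = l' := by
  obtain ⟨j, -, -, rfl⟩ := hl
  obtain ⟨j', -, -, rfl⟩ := hl'
  have h_diff : (2 * (j : ℝ) + 1) * Δ / 2 - (2 * j' + 1) * Δ / 2 = ((j - j' : ℤ) : ℝ) * Δ := by
    push_cast
    ring
  rw [h_diff, abs_mul, abs_of_pos hΔ, mul_lt_iff_lt_one_left hΔ, ← Int.cast_abs, ← Int.cast_one,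
    Int.cast_lt, Int.abs_lt_one_iff, sub_eq_zero] at h
  rw [h]

theorem midriseQuantizer_mem_alphabet (hΔ : 0 < Δ) {y : ℝ} (h₁ : -(2 ^ (B - 1) * Δ) ≤ y)
    (h₂ : y < 2 ^ (B - 1) * Δ) : midriseQuantizer Δ y ∈ alphabet Δ B := by
  refine ⟨⌊y / Δ⌋, Int.le_floor.2 ?_, Int.le_sub_one_iff.2 (Int.floor_lt.2 ?_), by
    rw [midriseQuantizer]; ring⟩
  · push_cast
    rwa [le_div_iff₀ hΔ, neg_mul]
  · push_cast
    rwa [div_lt_iff₀ hΔ]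

theorem eq_midriseQuantizer_of_isNearest (hΔ : 0 < Δ) {y l : ℝ} (hl : l ∈ alphabet Δ B)
    (h_near : ∀ l' ∈ alphabet Δ B, |y - l| ≤ |y - l'|) (h₁ : -(2 ^ (B - 1) * Δ) ≤ y)
    (h₂ : y < 2 ^ (B - 1) * Δ) (hy : Int.fract (y / Δ) ≠ 0) : l = midriseQuantizer Δ y := by
  have h_mid := abs_sub_midriseQuantizer_lt hΔ hy
  have h_mem := midriseQuantizer_mem_alphabet hΔ h₁ h₂
  refine eq_of_mem_alphabet_of_abs_sub_lt hΔ hl h_mem ?_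
  calc |l - midriseQuantizer Δ y| ≤ |y - l| + |y - midriseQuantizer Δ y| := by
        simpa only [abs_sub_comm l y] using abs_sub_le l y _
    _ < Δ / 2 + Δ / 2 := add_lt_add_of_le_of_lt ((h_near _ h_mem).trans h_mid.le) h_mid
    _ = Δ := add_halves Δ

end Alphabet

theorem dithered_quantizer_unbiased_general (Δ : ℝ) (hΔ : 0 < Δ) (B : ℕ)
    (q : ℝ → ℝ)
    (hq : ∀ y : ℝ, q y ∈ alphabet Δ B ∧ ∀ l ∈ alphabet Δ B, |y - q y| ≤ |y - l|)
    (x : ℝ) (hx : |x| ≤ ((2 : ℝ) ^ (B - 1) - 1) * Δ - Δ / 2) :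
    (1 / (2 * Δ)) * ∫ s in (-Δ)..Δ, q (x + s) = x := by
  have hq_ae : ∀ᵐ y, y ∈ Ι (x - Δ) (x + Δ) → q y = midriseQuantizer Δ y := by
    filter_upwards [ae_fract_div_ne_zero hΔ.ne'] with y hy hmem
    rw [uIoc_of_le (by linarith)] at hmem
    obtain ⟨hx₁, hx₂⟩ := abs_le.1 hx
    exact eq_midriseQuantizer_of_isNearest hΔ (hq y).1 (hq y).2
      (by linarith [hmem.1]) (by linarith [hmem.2]) hy
  have h_ends : x + Δ = x - Δ + (2 : ℤ) • Δ := by rw [two_zsmul]; ring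
  calc (1 / (2 * Δ)) * ∫ s in (-Δ)..Δ, q (x + s)
      = (1 / (2 * Δ)) * ∫ y in (x - Δ)..(x + Δ), midriseQuantizer Δ y := by
        rw [integral_comp_add_left, ← sub_eq_add_neg, integral_congr_ae hq_ae]
    _ = (1 / (2 * Δ)) * ∫ y in (x - Δ)..(x + Δ), y := by
        rw [h_ends, integral_midriseQuantizer_eq_integral_id hΔ]
    _ = x := by
        rw [integral_id]
        field_simp
        ring

theorem dithered_quantizer_unbiased (Δ : ℝ) (hΔ : 0 < Δ) (B : ℕ) (hB : 1 ≤ B)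
    (q : ℝ → ℝ)
    (hq : ∀ y : ℝ, q y ∈ alphabet Δ B ∧ ∀ l ∈ alphabet Δ B, |y - q y| ≤ |y - l|)
    (x : ℝ) (hx : |x| ≤ ((2 : ℝ) ^ (B - 1) - 1) * Δ - Δ / 2) :
    (1 / (2 * Δ)) * ∫ s in (-Δ)..Δ, q (x + s) = x :=
  dithered_quantizer_unbiased_general Δ hΔ B q hq x hx
end

section
/- With the uniform B-bit quantizer q with resolution Δ, dither τ ∼ Unif([−Δ,Δ]) and M = (2^{B−1}−1)Δ − Δ/2: for all x, y ∈ [−M, M], E_τ[|q(x + τ) − q(y + τ)|] = |x − y|. -/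
/-!
On the unsaturated range and off the lattice `Δℤ`, a nearest point of the alphabet is given by
the staircase `z ↦ (⌊z/Δ⌋ + 1/2) Δ`, and the dither keeps `x + s` and `y + s` in that range.
So for `x ≤ y` the integrand is a.e. `(⌊(y+s)/Δ⌋ - ⌊(x+s)/Δ⌋) Δ
= (y - x) - Δ (fract ((y+s)/Δ) - fract ((x+s)/Δ))`, and the two fractional parts have the same
integral over `[-Δ, Δ]`, which is two full periods.
-/

open MeasureTheory Set

theorem Function.Periodic.intervalIntegral_comp_add_left_eq {E : Type*} [NormedAddCommGroup E]
    [NormedSpace ℝ E] {f : ℝ → E} {T : ℝ}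
    (hf : Function.Periodic f T) (a c d : ℝ) :
    ∫ s in a..a + T, f (c + s) = ∫ s in a..a + T, f (d + s) := by
  simp only [intervalIntegral.integral_comp_add_left, ← add_assoc]
  exact hf.intervalIntegral_add_eq _ _

theorem intervalIntegrable_fract_div_comp_add (Δ c a b : ℝ) :
    IntervalIntegrable (fun s => Int.fract ((c + s) / Δ)) volume a b := by
  refine (intervalIntegrable_const (c := (1 : ℝ))).mono_fun' ?_ (.of_forall fun s => ?_)
  · exact (measurable_fract.comp ((measurable_const_add c).div_const Δ)).aestronglyMeasurable
  · dsimp only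
    rw [Real.norm_of_nonneg (Int.fract_nonneg _)]
    exact (Int.fract_lt_one _).le

theorem integral_floor_div_sub_floor_div_mul {Δ : ℝ} (hΔ : Δ ≠ 0) (n : ℕ) (a x y : ℝ) :
    ∫ s in a..a + n * Δ, ((⌊(y + s) / Δ⌋ : ℝ) - ⌊(x + s) / Δ⌋) * Δ = n * Δ * (y - x) := by
  have hfloor (c s : ℝ) : (⌊(c + s) / Δ⌋ : ℝ) * Δ = c + s - Δ * Int.fract ((c + s) / Δ) := by
    rw [Int.fract, mul_sub, mul_div_cancel₀ _ hΔ]; ring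
  have hper : Function.Periodic (fun t => Int.fract (t / Δ)) (n * Δ) := by
    simpa using ((Int.fract_periodic ℝ).div_const Δ).nat_mul n
  have hI := intervalIntegrable_fract_div_comp_add Δ
  calc ∫ s in a..a + n * Δ, ((⌊(y + s) / Δ⌋ : ℝ) - ⌊(x + s) / Δ⌋) * Δ
      = ∫ s in a..a + n * Δ, ((y - x) - Δ * (Int.fract ((y + s) / Δ) - Int.fract ((x + s) / Δ))) :=
        intervalIntegral.integral_congr fun s _ => by simp only [sub_mul, hfloor]; ring
    _ = n * Δ * (y - x) - Δ * ((∫ s in a..a + n * Δ, Int.fract ((y + s) / Δ)) -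
          ∫ s in a..a + n * Δ, Int.fract ((x + s) / Δ)) := by
        rw [intervalIntegral.integral_sub intervalIntegrable_const
            (((hI _ _ _).sub (hI _ _ _)).const_mul Δ), intervalIntegral.integral_const_mul,
          intervalIntegral.integral_sub (hI _ _ _) (hI _ _ _),
          intervalIntegral.integral_const, smul_eq_mul]
        ring
    _ = n * Δ * (y - x) := by
        rw [hper.intervalIntegral_comp_add_left_eq a y x, sub_self, mul_zero, sub_zero]

theorem eq_of_mem_alphabet_of_abs_sub_lt_s10 {Δ : ℝ} (hΔ : 0 < Δ) {B : ℕ} {a b : ℝ}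
    (ha : a ∈ alphabet Δ B) (hb : b ∈ alphabet Δ B) (hab : |a - b| < Δ) : a = b := by
  obtain ⟨j, -, -, rfl⟩ := ha
  obtain ⟨k, -, -, rfl⟩ := hb
  rw [show (2 * j + 1) * Δ / 2 - (2 * k + 1) * Δ / 2 = ((j - k : ℤ) : ℝ) * Δ by push_cast; ring,
    abs_mul, abs_of_pos hΔ, mul_lt_iff_lt_one_left hΔ] at hab
  have hjk : |j - k| < 1 := by exact_mod_cast hab
  rw [sub_eq_zero.1 (Int.abs_lt_one_iff.1 hjk)]

theorem eq_floor_of_mem_alphabet_of_forall_abs_sub_le {Δ : ℝ} (hΔ : 0 < Δ) {B : ℕ} {w z : ℝ}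
    (hw : w ∈ alphabet Δ B) (hmin : ∀ l ∈ alphabet Δ B, |z - w| ≤ |z - l|)
    (hz : |z| < 2 ^ (B - 1) * Δ) (hz_lattice : ∀ n : ℤ, z ≠ n * Δ) :
    w = (⌊z / Δ⌋ + 1 / 2) * Δ := by
  obtain ⟨hz_lo, hz_hi⟩ := abs_lt.1 hz
  have hfract_pos : 0 < Int.fract (z / Δ) :=
    Int.fract_pos.2 fun h => hz_lattice ⌊z / Δ⌋ ((div_eq_iff hΔ.ne').1 h)
  have hmem : (⌊z / Δ⌋ + 1 / 2) * Δ ∈ alphabet Δ B := by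
    refine ⟨⌊z / Δ⌋, Int.le_floor.2 ?_, Int.le_sub_one_of_lt (Int.floor_lt.2 ?_), by ring⟩
    · push_cast
      rw [le_div_iff₀ hΔ]
      linarith
    · push_cast
      rwa [div_lt_iff₀ hΔ]
  have hclose : |z - (⌊z / Δ⌋ + 1 / 2) * Δ| < Δ / 2 := by
    have hz_eq : z = (⌊z / Δ⌋ + Int.fract (z / Δ)) * Δ := by
      rw [Int.floor_add_fract, div_mul_cancel₀ _ hΔ.ne']
    have := Int.fract_lt_one (z / Δ)
    rw [abs_lt]
    constructor <;> nlinarith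
  refine eq_of_mem_alphabet_of_abs_sub_lt_s10 hΔ hw hmem ?_
  calc |w - (⌊z / Δ⌋ + 1 / 2) * Δ| ≤ |w - z| + |z - (⌊z / Δ⌋ + 1 / 2) * Δ| := abs_sub_le ..
    _ < Δ := by linarith [hmin _ hmem, abs_sub_comm w z]

theorem integral_abs_quantizer_sub {Δ : ℝ} (hΔ : 0 < Δ) {B : ℕ} {q : ℝ → ℝ}
    (hq : ∀ y : ℝ, q y ∈ alphabet Δ B ∧ ∀ l ∈ alphabet Δ B, |y - q y| ≤ |y - l|) {x y : ℝ}
    (hx : |x| ≤ ((2 : ℝ) ^ (B - 1) - 1) * Δ - Δ / 2)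
    (hy : |y| ≤ ((2 : ℝ) ^ (B - 1) - 1) * Δ - Δ / 2) (hxy : x ≤ y) :
    ∫ s in (-Δ)..Δ, |q (x + s) - q (y + s)| = 2 * Δ * (y - x) := by
  have hquant (c : ℝ) (hc : |c| ≤ ((2 : ℝ) ^ (B - 1) - 1) * Δ - Δ / 2) :
      ∀ᵐ s, s ∈ uIoc (-Δ) Δ → q (c + s) = (⌊(c + s) / Δ⌋ + 1 / 2) * Δ := by
    have hoff : ∀ᵐ s, ∀ n : ℤ, c + s ≠ n * Δ :=
      ae_all_iff.2 fun n => (volume.ae_ne (n * Δ - c)).mono fun s hs h => hs (by linarith)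
    filter_upwards [hoff] with s hs_off hs
    rw [uIoc_of_le (by linarith)] at hs
    have hrange : |c + s| < 2 ^ (B - 1) * Δ := by
      linarith [abs_add_le c s, abs_le.2 ⟨hs.1.le, hs.2⟩]
    exact eq_floor_of_mem_alphabet_of_forall_abs_sub_le hΔ (hq _).1 (hq _).2 hrange hs_off
  have hae : ∀ᵐ s, s ∈ uIoc (-Δ) Δ →
      |q (x + s) - q (y + s)| = ((⌊(y + s) / Δ⌋ : ℝ) - ⌊(x + s) / Δ⌋) * Δ := by
    filter_upwards [hquant x hx, hquant y hy] with s hxs hys hs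
    rw [hxs hs, hys hs, abs_sub_comm, abs_of_nonneg (sub_nonneg.2 (by gcongr))]
    ring
  have hperiods := integral_floor_div_sub_floor_div_mul hΔ.ne' 2 (-Δ) x y
  rw [show -Δ + ((2 : ℕ) : ℝ) * Δ = Δ by ring, Nat.cast_ofNat] at hperiods
  rw [intervalIntegral.integral_congr_ae hae, hperiods]

theorem dithered_quantizer_distance_unbiased_general (Δ : ℝ) (hΔ : 0 < Δ) (B : ℕ)
    (q : ℝ → ℝ)
    (hq : ∀ y : ℝ, q y ∈ alphabet Δ B ∧ ∀ l ∈ alphabet Δ B, |y - q y| ≤ |y - l|)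
    (x y : ℝ) (hx : |x| ≤ ((2 : ℝ) ^ (B - 1) - 1) * Δ - Δ / 2)
    (hy : |y| ≤ ((2 : ℝ) ^ (B - 1) - 1) * Δ - Δ / 2) :
    (1 / (2 * Δ)) * ∫ s in (-Δ)..Δ, |q (x + s) - q (y + s)| = |x - y| := by
  wlog hxy : x ≤ y generalizing x y
  · simp only [abs_sub_comm x y, abs_sub_comm (q (x + _))]
    exact this y x hy hx (le_of_not_ge hxy)
  rw [integral_abs_quantizer_sub hΔ hq hx hy hxy, abs_sub_comm, abs_of_nonneg (sub_nonneg.2 hxy)]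
  field_simp

theorem dithered_quantizer_distance_unbiased (Δ : ℝ) (hΔ : 0 < Δ) (B : ℕ) (hB : 1 ≤ B)
    (q : ℝ → ℝ)
    (hq : ∀ y : ℝ, q y ∈ alphabet Δ B ∧ ∀ l ∈ alphabet Δ B, |y - q y| ≤ |y - l|)
    (hmono : Monotone q)
    (x y : ℝ) (hx : |x| ≤ ((2 : ℝ) ^ (B - 1) - 1) * Δ - Δ / 2)
    (hy : |y| ≤ ((2 : ℝ) ^ (B - 1) - 1) * Δ - Δ / 2) :
    (1 / (2 * Δ)) * ∫ s in (-Δ)..Δ, |q (x + s) - q (y + s)| = |x - y| :=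
  dithered_quantizer_distance_unbiased_general Δ hΔ B q hq x y hx hy
end

section
/- Let ν be a real-valued random variable with E[ν²] < ∞, independent of τ ∼ Unif([−λ, λ]), and fix a real number s. Define Y := 1{sign(s + ν + τ) ≠ sign(s + τ)}·|ν|. Then E[Y] ≤ ‖ν‖²_{L²}/(2λ). -/
/-! Given `ν = x`, the signs of `s + x + τ` and `s + τ` differ only if `-τ` lies between `s` and
`s + x`, an interval of length `|x|`. So averaging over `τ` bounds the integrand by
`|x| · |x| / (2λ)`, and Tonelli's theorem integrates this bound over `ν`. -/

open MeasureTheory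

noncomputable def rsign (t : ℝ) : ℝ := if 0 ≤ t then 1 else -1

open Set ENNReal

@[fun_prop]
theorem measurable_rsign : Measurable rsign :=
  measurable_const.ite measurableSet_Ici measurable_const

def signFlipSet (s x : ℝ) : Set ℝ := {τ | rsign (s + x + τ) ≠ rsign (s + τ)}

theorem measurableSet_signFlipSet (s x : ℝ) : MeasurableSet (signFlipSet s x) :=
  (measurableSet_eq_fun (by fun_prop) (by fun_prop)).compl

theorem signFlipSet_subset_Ico (s x : ℝ) :
    signFlipSet s x ⊆ Ico (min (-(s + x)) (-s)) (max (-(s + x)) (-s)) := by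
  intro τ hτ
  simp only [signFlipSet, rsign, mem_ofPred_eq] at hτ
  rw [mem_Ico, min_le_iff, lt_max_iff]
  split_ifs at hτ <;> grind

theorem volume_signFlipSet_le (s x : ℝ) : volume (signFlipSet s x) ≤ ENNReal.ofReal |x| :=
  calc volume (signFlipSet s x)
      ≤ volume (Ico (min (-(s + x)) (-s)) (max (-(s + x)) (-s))) :=
        measure_mono (signFlipSet_subset_Ico s x)
    _ = ENNReal.ofReal |x| := by
        rw [Real.volume_Ico, max_sub_min_eq_abs, show -s - -(s + x) = x by ring]

theorem lintegral_signFlip_le (s x : ℝ) :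
    ∫⁻ τ, ENNReal.ofReal (if rsign (s + x + τ) ≠ rsign (s + τ) then |x| else 0) ≤
      ENNReal.ofReal (x ^ 2) := by
  have h_ind : (fun τ => ENNReal.ofReal (if rsign (s + x + τ) ≠ rsign (s + τ) then |x| else 0)) =
      (signFlipSet s x).indicator fun _ => ENNReal.ofReal |x| := by
    ext τ
    simp only [indicator_apply, signFlipSet, mem_ofPred_eq]
    split_ifs <;> simp
  calc _ = ENNReal.ofReal |x| * volume (signFlipSet s x) := by
        rw [h_ind, lintegral_indicator_const (measurableSet_signFlipSet s x)]
    _ ≤ ENNReal.ofReal |x| * ENNReal.ofReal |x| := by gcongr; exact volume_signFlipSet_le s x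
    _ = ENNReal.ofReal (x ^ 2) := by rw [← ofReal_mul (abs_nonneg x), ← abs_mul, ← sq, abs_sq]

theorem integral_prod_le_of_lintegral_le {α β : Type*} [MeasurableSpace α] [MeasurableSpace β]
    {μ : Measure α} {ν : Measure β} [SFinite ν] {f : α × β → ℝ} {g : α → ℝ} {c : ℝ≥0∞}
    (hf : AEMeasurable f (μ.prod ν)) (hf0 : 0 ≤ᵐ[μ.prod ν] f) (hg : Integrable g μ)
    (hg0 : 0 ≤ᵐ[μ] g) (hc : c ≠ ∞)
    (h : ∀ a, ∫⁻ b, ENNReal.ofReal (f (a, b)) ∂ν ≤ c * ENNReal.ofReal (g a)) :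
    ∫ p, f p ∂(μ.prod ν) ≤ c.toReal * ∫ a, g a ∂μ := by
  have h_lint : ∫⁻ p, ENNReal.ofReal (f p) ∂(μ.prod ν) ≤ c * ENNReal.ofReal (∫ a, g a ∂μ) :=
    calc ∫⁻ p, ENNReal.ofReal (f p) ∂(μ.prod ν)
        = ∫⁻ a, ∫⁻ b, ENNReal.ofReal (f (a, b)) ∂ν ∂μ := lintegral_prod _ hf.ennreal_ofReal
      _ ≤ ∫⁻ a, c * ENNReal.ofReal (g a) ∂μ := lintegral_mono h
      _ = c * ENNReal.ofReal (∫ a, g a ∂μ) := by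
        rw [lintegral_const_mul' _ _ hc, ofReal_integral_eq_lintegral_ofReal hg hg0]
  rw [integral_eq_lintegral_of_nonneg_ae hf0 hf.aestronglyMeasurable,
    ← toReal_ofReal (integral_nonneg_of_ae hg0), ← toReal_mul]
  exact toReal_mono (mul_ne_top hc ofReal_ne_top) h_lint

theorem expected_noise_flip_bound_general {Ω : Type*} [MeasurableSpace Ω]
    (μ : Measure Ω) (ν : Ω → ℝ) (hν : Measurable ν)
    (hν2 : Integrable (fun ω => (ν ω) ^ 2) μ)
    (lam : ℝ) (hlam : 0 < lam) (s : ℝ) :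
    (∫ p : Ω × ℝ,
        (if rsign (s + ν p.1 + p.2) ≠ rsign (s + p.2) then |ν p.1| else 0)
        ∂(μ.prod ((ENNReal.ofReal (2 * lam))⁻¹ •
            (volume.restrict (Set.Icc (-lam) lam))))) ≤
      (∫ ω, (ν ω) ^ 2 ∂μ) / (2 * lam) := by
  have h2lam : 0 < 2 * lam := by linarith
  have h_meas : Measurable fun p : Ω × ℝ =>
      if rsign (s + ν p.1 + p.2) ≠ rsign (s + p.2) then |ν p.1| else 0 :=
    Measurable.ite (measurableSet_eq_fun (by fun_prop)
      (by fun_prop)).compl (by fun_prop) measurable_const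
  calc _ ≤ (ENNReal.ofReal (2 * lam))⁻¹.toReal * ∫ ω, ν ω ^ 2 ∂μ :=
        integral_prod_le_of_lintegral_le h_meas.aemeasurable
          (.of_forall fun p => by dsimp only; split_ifs <;> positivity) hν2
          (.of_forall fun ω => sq_nonneg (ν ω)) (inv_ne_top.mpr (ofReal_pos.mpr h2lam).ne')
          fun ω => by
            rw [lintegral_smul_measure, smul_eq_mul]
            gcongr
            exact (setLIntegral_le_lintegral _ _).trans (lintegral_signFlip_le s (ν ω))
    _ = _ := by rw [toReal_inv, toReal_ofReal h2lam.le, inv_mul_eq_div]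

theorem expected_noise_flip_bound {Ω : Type*} [MeasurableSpace Ω]
    (μ : Measure Ω) [IsProbabilityMeasure μ] (ν : Ω → ℝ) (hν : Measurable ν)
    (hν2 : Integrable (fun ω => (ν ω) ^ 2) μ)
    (lam : ℝ) (hlam : 0 < lam) (s : ℝ) :
    (∫ p : Ω × ℝ,
        (if rsign (s + ν p.1 + p.2) ≠ rsign (s + p.2) then |ν p.1| else 0)
        ∂(μ.prod ((ENNReal.ofReal (2 * lam))⁻¹ •
            (volume.restrict (Set.Icc (-lam) lam))))) ≤
      (∫ ω, (ν ω) ^ 2 ∂μ) / (2 * lam) :=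
  expected_noise_flip_bound_general μ ν hν hν2 lam hlam s
end
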